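/- Let ρ be any nonlinearity and let M = (V, E, {v⁰_1,…,v⁰_{D₀}}, V_out, Ω, Θ) be a non-degenerate clones-free GFNN with D₀ ≥ 2 input nodes, and let M_a be the network obtained from M by anchoring the input v⁰_{D₀} to a ∈ ℝ. Then M_a is non-degenerate, and for every output node w of M not retained in M_a, the function (t_1,…,t_{D₀−1}) ↦ w^{ρ,M}(t_1,…,t_{D₀−1}, a) is constant, while for every retained output w, w^{ρ,M_a}(t_1,…,t_{D₀−1}) = w^{ρ,M}(t_1,…,t_{D₀−1}, a) for all real inputs. -/

import Mathlib

/-- A general feed-forward neural network (GFNN) with input nodes indexed by `ι`: a finite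
DAG (acyclicity via well-foundedness of the edge relation), input nodes, output nodes,
weights and biases.  Semantic conditions (inputs are exactly the sources, injectivity of the
input labelling, nonzero weights on edges) are imposed as hypotheses where needed. -/
structure GFNN (ι : Type) where
  V : Type
  [instFintype : Fintype V]
  Adj : V → V → Prop
  wf : WellFounded Adj
  inp : ι → V
  out : Set V
  wt : V → V → ℝ
  bias : V → ℝ

attribute [instance] GFNN.instFintype

/-- The output map realized by a node under the nonlinearity `ρ`. -/
noncomputable def GFNN.outMap {ι : Type} (N : GFNN ι) (ρ : ℝ → ℝ) : N.V → (ι → ℝ) → ℝ :=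
  N.wf.fix (C := fun _ => (ι → ℝ) → ℝ) fun v rec =>
    letI : ∀ a b : N.V, Decidable (N.Adj a b) := fun _ _ => Classical.propDecidable _
    letI : Decidable (∃ i, N.inp i = v) := Classical.propDecidable _
    if h : ∃ i, N.inp i = v then fun t => t h.choose
    else fun t =>
      ρ ((∑ u : N.V, if hu : N.Adj u v then N.wt v u * rec u hu t else 0) + N.bias v)

/-- A network is non-degenerate if every node is an ancestor of some output node. -/
def GFNN.NonDegenerate {ι : Type} (N : GFNN ι) : Prop :=
  ∀ v : N.V, ∃ w ∈ N.out, Relation.ReflTransGen N.Adj v w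

/-- A network is clones-free if no two distinct nodes have the same parent set, the same
bias, and the same incoming weights. -/
def GFNN.ClonesFree {ι : Type} (N : GFNN ι) : Prop :=
  ¬ ∃ v₁ v₂ : N.V, v₁ ≠ v₂ ∧ (∀ u, N.Adj u v₁ ↔ N.Adj u v₂) ∧
      N.bias v₁ = N.bias v₂ ∧ ∀ u, N.Adj u v₁ → N.wt v₁ u = N.wt v₂ u

/-- The recursively defined constant values `a_v` obtained by propagating the anchored value
`a` at the last input through the network: `a_{v⁰_{D₀}} = a`, and
`a_v = ρ(Σ_{u ∈ par(v)} ω_{vu} a_u + θ_v)` otherwise. -/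
noncomputable def anchorVal {d : ℕ} (M : GFNN (Fin (d + 1))) (ρ : ℝ → ℝ) (a : ℝ) :
    M.V → ℝ :=
  M.wf.fix (C := fun _ => ℝ) fun v rec =>
    letI : ∀ a' b : M.V, Decidable (M.Adj a' b) := fun _ _ => Classical.propDecidable _
    letI : Decidable (M.inp (Fin.last d) = v) := Classical.propDecidable _
    if M.inp (Fin.last d) = v then a
    else ρ ((∑ u : M.V, if hu : M.Adj u v then M.wt v u * rec u hu else 0) + M.bias v)

/-- The set of nodes retained after anchoring the last input: nodes whose ancestor
subnetwork contains one of the first `d` input nodes. -/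
def anchorKeep {d : ℕ} (M : GFNN (Fin (d + 1))) : Set M.V :=
  {v | ∃ j : Fin d, Relation.ReflTransGen M.Adj (M.inp j.castSucc) v}

/-- The network `M_a` obtained from `M` by anchoring the input `v⁰_{D₀}` to `a ∈ ℝ`: the
retained nodes with induced edges and weights, inputs `v⁰_1, …, v⁰_{D₀−1}`, outputs
`V_out ∩ V^{M_a}`, and biases modified by `θ̃_v = θ_v + Σ_{u ∈ par_M(v) \ V^{M_a}} ω_{vu} a_u`. -/
noncomputable def anchored {d : ℕ} (M : GFNN (Fin (d + 1))) (ρ : ℝ → ℝ) (a : ℝ) :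
    GFNN (Fin d) where
  V := {v : M.V // v ∈ anchorKeep M}
  instFintype := @Subtype.fintype _ _ (Classical.decPred _) _
  Adj := fun u v => M.Adj u.1 v.1
  wf := by exact InvImage.wf Subtype.val M.wf
  inp := fun j => ⟨M.inp j.castSucc, ⟨j, Relation.ReflTransGen.refl⟩⟩
  out := {w | w.1 ∈ M.out}
  wt := fun v u => M.wt v.1 u.1
  bias := fun v =>
    letI : ∀ a' b : M.V, Decidable (M.Adj a' b) := fun _ _ => Classical.propDecidable _
    letI : DecidablePred (· ∈ anchorKeep M) := Classical.decPred _
    M.bias v.1 + ∑ u : M.V,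
      if M.Adj u v.1 ∧ u ∉ anchorKeep M then M.wt v.1 u * anchorVal M ρ a u else 0


open Classical in
lemma GFNN.outMap_eq {ι : Type} (N : GFNN ι) (ρ : ℝ → ℝ) (v : N.V) :
    N.outMap ρ v =
      if h : ∃ i, N.inp i = v then fun t => t h.choose
      else fun t =>
        ρ ((∑ u : N.V, if _hu : N.Adj u v then N.wt v u * N.outMap ρ u t else 0) + N.bias v) := by
  conv_lhs => rw [GFNN.outMap, WellFounded.fix_eq]
  rfl

open Classical in
lemma anchorVal_eq {d : ℕ} (M : GFNN (Fin (d + 1))) (ρ : ℝ → ℝ) (a : ℝ) (v : M.V) :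
    anchorVal M ρ a v =
      if M.inp (Fin.last d) = v then a
      else ρ ((∑ u : M.V, if _hu : M.Adj u v then M.wt v u * anchorVal M ρ a u else 0)
        + M.bias v) := by
  conv_lhs => rw [anchorVal, WellFounded.fix_eq]
  rfl

lemma anchorKeep_tail {d : ℕ} {M : GFNN (Fin (d + 1))} {u v : M.V}
    (hu : u ∈ anchorKeep M) (h : M.Adj u v) : v ∈ anchorKeep M := by
  obtain ⟨j, p⟩ := hu; exact ⟨j, p.tail h⟩

lemma outMap_eq_anchorVal {d : ℕ} (M : GFNN (Fin (d + 1)))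
    (hinj : Function.Injective M.inp) (ρ : ℝ → ℝ) (a : ℝ) :
    ∀ v ∉ anchorKeep M, ∀ t : Fin d → ℝ,
      M.outMap ρ v (Fin.snoc t a) = anchorVal M ρ a v := by
  intro v
  induction v using M.wf.induction with
  | _ v IH =>
  intro hv t
  rw [GFNN.outMap_eq, anchorVal_eq]
  by_cases h : ∃ i, M.inp i = v
  · have hlast : M.inp (Fin.last d) = v := by
      obtain ⟨i, hi⟩ := h
      rcases eq_or_ne i (Fin.last d) with rfl | hne
      · exact hi
      · obtain ⟨j, rfl⟩ := Fin.exists_castSucc_eq.mpr hne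
        exact absurd ⟨j, by rw [hi]⟩ hv
    have hc : h.choose = Fin.last d := hinj (h.choose_spec.trans hlast.symm)
    simp only [dif_pos h, if_pos hlast, hc, Fin.snoc_last]
  · rw [dif_neg h, if_neg (fun hl => h ⟨_, hl⟩)]
    show ρ _ = ρ _
    congr 2
    refine Finset.sum_congr rfl fun u _ => ?_
    by_cases hu : M.Adj u v
    · rw [dif_pos hu, dif_pos hu, IH u hu (fun hk => hv (anchorKeep_tail hk hu)) t]
    · rw [dif_neg hu, dif_neg hu]

open Classical in
lemma anchored_outMap_eq {d : ℕ} (M : GFNN (Fin (d + 1)))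
    (hinj : Function.Injective M.inp)
    (hsrc : ∀ v : M.V, (∀ u, ¬ M.Adj u v) ↔ v ∈ Set.range M.inp)
    (ρ : ℝ → ℝ) (a : ℝ) :
    ∀ v, ∀ hv : v ∈ anchorKeep M, ∀ t : Fin d → ℝ,
      (anchored M ρ a).outMap ρ ⟨v, hv⟩ t = M.outMap ρ v (Fin.snoc t a) := by
  intro v
  induction v using M.wf.induction with
  | _ v IH =>
  intro hv t
  by_cases h : ∃ i, M.inp i = v
  · -- input node retained: must be one of the first d inputs
    obtain ⟨j, hj⟩ : ∃ j : Fin d, M.inp j.castSucc = v := by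
      obtain ⟨j, p⟩ := hv
      rcases p.cases_tail with heq | ⟨c, _, hc⟩
      · exact ⟨j, heq.symm⟩
      · exact absurd hc (((hsrc v).mpr h) c)
    have hN : ∃ i : Fin d, (anchored M ρ a).inp i = ⟨v, hv⟩ := ⟨j, Subtype.ext hj⟩
    have hc1 : hN.choose = j := by
      have h2 := congrArg Subtype.val hN.choose_spec
      exact Fin.castSucc_injective d (hinj (h2.trans hj.symm))
    have hc2 : h.choose = j.castSucc := hinj (h.choose_spec.trans hj.symm)
    refine (congrFun (GFNN.outMap_eq (anchored M ρ a) ρ ⟨v, hv⟩) t).trans ?_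
    rw [GFNN.outMap_eq M]
    simp only [dif_pos hN, dif_pos h, hc1, hc2, Fin.snoc_castSucc]
  · -- non-input node
    have hN : ¬∃ i : Fin d, (anchored M ρ a).inp i = ⟨v, hv⟩ := by
      rintro ⟨i, hi⟩
      exact h ⟨i.castSucc, congrArg Subtype.val hi⟩
    refine (congrFun (GFNN.outMap_eq (anchored M ρ a) ρ ⟨v, hv⟩) t).trans ?_
    rw [GFNN.outMap_eq M]
    simp only [dif_neg hN, dif_neg h]
    congr 1
    have hbias : (anchored M ρ a).bias ⟨v, hv⟩ = M.bias v +
        ∑ u ∈ Finset.univ.filter (fun u => u ∉ anchorKeep M),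
          (if M.Adj u v then M.wt v u * anchorVal M ρ a u else 0) := by
      have h1 : (anchored M ρ a).bias ⟨v, hv⟩ = M.bias v +
          ∑ u : M.V, (if M.Adj u v ∧ u ∉ anchorKeep M
            then M.wt v u * anchorVal M ρ a u else 0) := by
        simp only [anchored]
      rw [h1]
      congr 1
      rw [Finset.sum_filter]
      refine Finset.sum_congr rfl fun u _ => ?_
      by_cases hk : u ∈ anchorKeep M <;> by_cases hadj : M.Adj u v <;>
        simp [hk, hadj]
    have hSN : (∑ u : (anchored M ρ a).V,
          if _hu : (anchored M ρ a).Adj u ⟨v, hv⟩ then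
            (anchored M ρ a).wt ⟨v, hv⟩ u * (anchored M ρ a).outMap ρ u t else 0)
        = ∑ u ∈ Finset.univ.filter (fun u => u ∈ anchorKeep M),
            (if _hu : M.Adj u v then M.wt v u * M.outMap ρ u (Fin.snoc t a) else 0) := by
      rw [Finset.sum_subtype (p := (· ∈ anchorKeep M))
        (F := (anchored M ρ a).instFintype) _ (fun x => by simp)
        (fun u => if _hu : M.Adj u v then M.wt v u * M.outMap ρ u (Fin.snoc t a) else 0)]
      refine Finset.sum_congr rfl fun u _ => ?_
      show (if _hu : M.Adj u.1 v then M.wt v u.1 * (anchored M ρ a).outMap ρ u t else 0) = _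
      by_cases hadj : M.Adj u.1 v
      · rw [dif_pos hadj, dif_pos hadj]
        exact congrArg (M.wt v u.1 * ·) (IH u.1 hadj u.2 t)
      · rw [dif_neg hadj, dif_neg hadj]
    have hSM : (∑ u : M.V,
          if _hu : M.Adj u v then M.wt v u * M.outMap ρ u (Fin.snoc t a) else 0)
        = (∑ u ∈ Finset.univ.filter (fun u => u ∈ anchorKeep M),
            (if _hu : M.Adj u v then M.wt v u * M.outMap ρ u (Fin.snoc t a) else 0))
          + ∑ u ∈ Finset.univ.filter (fun u => u ∉ anchorKeep M),
            (if M.Adj u v then M.wt v u * anchorVal M ρ a u else 0) := by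
      rw [← Finset.sum_filter_add_sum_filter_not Finset.univ (· ∈ anchorKeep M)]
      congr 1
      refine Finset.sum_congr rfl fun u hu => ?_
      have hk : u ∉ anchorKeep M := (Finset.mem_filter.mp hu).2
      by_cases hadj : M.Adj u v
      · rw [dif_pos hadj, if_pos hadj,
          outMap_eq_anchorVal M hinj ρ a u hk t]
      · rw [dif_neg hadj, if_neg hadj]
    rw [hbias, hSN, hSM]
    ring

lemma anchorKeep_lift_path {d : ℕ} (M : GFNN (Fin (d + 1))) (ρ : ℝ → ℝ) (a : ℝ) :
    ∀ {v w : M.V}, Relation.ReflTransGen M.Adj v w → ∀ hv : v ∈ anchorKeep M,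
      ∃ hw : w ∈ anchorKeep M,
        Relation.ReflTransGen (anchored M ρ a).Adj ⟨v, hv⟩ ⟨w, hw⟩ := by
  intro v w h
  induction h with
  | refl => exact fun hv => ⟨hv, Relation.ReflTransGen.refl⟩
  | tail _ hadj ih =>
    intro hv
    obtain ⟨hb, p⟩ := ih hv
    exact ⟨anchorKeep_tail hb hadj, p.tail hadj⟩

/-- Input anchoring: for a non-degenerate clones-free GFNN `M` with `D₀ = d + 1 ≥ 2` inputs,
the anchored network `M_a` is non-degenerate; every output of `M` not retained in `M_a`
realizes a map which is constant in the remaining inputs once the last input is fixed to `a`;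
and every retained output of `M_a` realizes exactly the map of `M` with last input anchored
to `a`. -/
theorem anchored_properties {d : ℕ} (hd : 1 ≤ d) (M : GFNN (Fin (d + 1)))
    (hinj : Function.Injective M.inp)
    (hsrc : ∀ v : M.V, (∀ u, ¬ M.Adj u v) ↔ v ∈ Set.range M.inp)
    (hout : ∀ v ∈ M.out, v ∉ Set.range M.inp)
    (hwt : ∀ u v, M.Adj u v → M.wt v u ≠ 0)
    (hnd : M.NonDegenerate) (hcf : M.ClonesFree)
    (ρ : ℝ → ℝ) (a : ℝ) :
    (anchored M ρ a).NonDegenerate ∧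
    (∀ w ∈ M.out, w ∉ anchorKeep M →
      ∀ t t' : Fin d → ℝ,
        M.outMap ρ w (Fin.snoc t a) = M.outMap ρ w (Fin.snoc t' a)) ∧
    (∀ w : (anchored M ρ a).V, w.1 ∈ M.out →
      ∀ t : Fin d → ℝ,
        (anchored M ρ a).outMap ρ w t = M.outMap ρ w.1 (Fin.snoc t a)) := by
  refine ⟨?_, ?_, ?_⟩
  · intro v
    obtain ⟨w, hw, hpath⟩ := hnd v.1
    obtain ⟨hwk, p⟩ := anchorKeep_lift_path M ρ a hpath v.2
    exact ⟨⟨w, hwk⟩, hw, p⟩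
  · intro w _ hwk t t'
    rw [outMap_eq_anchorVal M hinj ρ a w hwk t, outMap_eq_anchorVal M hinj ρ a w hwk t']
  · intro w hw t
    exact anchored_outMap_eq M hinj hsrc ρ a w.1 w.2 t
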